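/- arXiv:2408.01758 — 11 statements merged into one kernel-verified Lean document; each statement's English description precedes it below -/
import Mathlib

section
/- Let A be a commutative ring, S a multiplicatively closed subset of A, and Q an ideal of A with Q ∩ S = ∅. If Q is a weakly S-primary ideal of A and P is an ideal of A with P ∩ S ≠ ∅, then Q ∩ P is a weakly S-primary ideal of A. -/
/-- An ideal `Q` of a commutative ring `A` (disjoint from `S`) is *weakly `S`-primary*
if there exists `s ∈ S` such that for all `x y : A`, if `x*y ∈ Q` and `x*y ≠ 0`,
then `s*x ∈ Q` or `s*y ∈ rad(Q)`. -/
def WeaklySPrimary {A : Type*} [CommRing A] (S : Set A) (Q : Ideal A) : Prop :=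
  ∃ s ∈ S, ∀ x y : A, x * y ∈ Q → x * y ≠ 0 → s * x ∈ Q ∨ s * y ∈ Q.radical

theorem weaklySPrimary_inter {A : Type*} [CommRing A] (S : Set A)
    (hS : ∀ a ∈ S, ∀ b ∈ S, a * b ∈ S) (Q P : Ideal A)
    (hQS : (Q : Set A) ∩ S = ∅)
    (hQ : WeaklySPrimary S Q) (hP : ((P : Set A) ∩ S).Nonempty) :
    WeaklySPrimary S (Q ⊓ P) := by
  obtain ⟨s, hsS, hs⟩ := hQ
  obtain ⟨t, htP, htS⟩ := hP
  refine ⟨s * t, hS s hsS t htS, ?_⟩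
  intro x y hxy hne
  have hxyQ : x * y ∈ Q := hxy.1
  rcases hs x y hxyQ hne with h | h
  · left
    refine ⟨?_, ?_⟩
    · have : s * t * x = t * (s * x) := by ring
      rw [this]; exact Q.mul_mem_left t h
    · have : s * t * x = (s * x) * t := by ring
      rw [this]; exact P.mul_mem_left _ htP
  · right
    obtain ⟨n, hn⟩ := h
    refine ⟨n + 1, ?_, ?_⟩
    · have : (s * t * y) ^ (n + 1) = ((s * y) ^ n * (t ^ (n+1) * (s * y))) := by ring
      rw [this]; exact Q.mul_mem_right _ hn
    · have : (s * t * y) ^ (n + 1) = ((s * y) ^ (n+1) * t ^ n) * t := by ring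
      rw [this]; exact P.mul_mem_left _ htP
end

section
/- Let A be a commutative ring, S a multiplicatively closed subset of A, and Q an ideal of A with Q ∩ S = ∅. If Q is a weakly S-primary ideal of A and I is an ideal of A with I ∩ S ≠ ∅, then the product ideal I*Q is a weakly S-primary ideal of A (and (I*Q) ∩ S = ∅). -/
/-! If `s` witnesses that `Q` is weakly `S`-primary and `t ∈ I ∩ S`, then `s * t` witnesses it
for `I * Q`: multiplying by `t` moves `Q` into `I * Q`, and moves `rad Q` into
`rad I ⊓ rad Q = rad (I * Q)`. -/

theorem Ideal.mul_mem_radical_mul {A : Type*} [CommRing A] {I Q : Ideal A} {t y : A}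
    (ht : t ∈ I) (hy : y ∈ Q.radical) : t * y ∈ (I * Q).radical := by
  rw [Ideal.radical_mul]
  exact ⟨I.le_radical (I.mul_mem_right y ht), Q.radical.mul_mem_left t hy⟩

theorem WeaklySPrimary.mul_left {A : Type*} [CommRing A] {S : Set A}
    (hS : ∀ a ∈ S, ∀ b ∈ S, a * b ∈ S) {Q : Ideal A} (hQ : WeaklySPrimary S Q)
    {I : Ideal A} {t : A} (htI : t ∈ I) (htS : t ∈ S) : WeaklySPrimary S (I * Q) := by
  obtain ⟨s, hsS, hs⟩ := hQ
  refine ⟨s * t, hS s hsS t htS, fun x y hxy hxy0 => ?_⟩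
  rw [mul_comm s t, mul_assoc, mul_assoc]
  exact (hs x y (Ideal.mul_le_right hxy) hxy0).imp (Ideal.mul_mem_mul htI)
    (Ideal.mul_mem_radical_mul htI)

theorem weaklySPrimary_mul {A : Type*} [CommRing A] (S : Set A)
    (hS : ∀ a ∈ S, ∀ b ∈ S, a * b ∈ S) (Q I : Ideal A)
    (hQS : (Q : Set A) ∩ S = ∅)
    (hQ : WeaklySPrimary S Q) (hI : ((I : Set A) ∩ S).Nonempty) :
    WeaklySPrimary S (I * Q) ∧ ((I * Q : Ideal A) : Set A) ∩ S = ∅ := by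
  obtain ⟨t, htI, htS⟩ := hI
  refine ⟨hQ.mul_left hS htI htS, Set.subset_empty_iff.mp ?_⟩
  exact hQS ▸ Set.inter_subset_inter_left S Ideal.mul_le_right
end

section
/- Let A be a commutative ring and S a multiplicatively closed subset of A such that the zero ideal of A is an S-primary ideal. If Q is a weakly S-primary ideal of A (with Q ∩ S = ∅), then rad(Q) is an S-prime ideal of A. -/
/-- `Q` is *`S`-primary*: there is `s ∈ S` such that `x*y ∈ Q` implies
`s*x ∈ Q` or `s*y ∈ rad(Q)`. -/
def SPrimary {A : Type*} [CommRing A] (S : Set A) (Q : Ideal A) : Prop :=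
  ∃ s ∈ S, ∀ x y : A, x * y ∈ Q → s * x ∈ Q ∨ s * y ∈ Q.radical

/-- `Q` is *`S`-prime*: there is `s ∈ S` such that `x*y ∈ Q` implies
`s*x ∈ Q` or `s*y ∈ Q`. -/
def SPrime {A : Type*} [CommRing A] (S : Set A) (Q : Ideal A) : Prop :=
  ∃ s ∈ S, ∀ x y : A, x * y ∈ Q → s * x ∈ Q ∨ s * y ∈ Q

theorem radical_sPrime_of_weaklySPrimary {A : Type*} [CommRing A] (S : Set A)
    (hS : ∀ a ∈ S, ∀ b ∈ S, a * b ∈ S)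
    (h0S : (0 : A) ∉ S) (h0 : SPrimary S (⊥ : Ideal A))
    (Q : Ideal A) (hQS : (Q : Set A) ∩ S = ∅)
    (hQ : WeaklySPrimary S Q) :
    SPrime S Q.radical := by
  obtain ⟨s0, hs0S, hs0⟩ := h0
  obtain ⟨s1, hs1S, hs1⟩ := hQ
  have hone : (1 : A) ∉ Q := by
    intro h1
    have : s0 ∈ (Q : Set A) ∩ S := ⟨by simpa using Q.mul_mem_left s0 h1, hs0S⟩
    rw [hQS] at this
    exact this
  refine ⟨s0 * s1, hS _ hs0S _ hs1S, ?_⟩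
  intro x y hxy
  rw [Ideal.mem_radical_iff] at hxy
  obtain ⟨n, hn⟩ := hxy
  cases n with
  | zero => exact absurd (by simpa using hn) hone
  | succ k =>
    rw [mul_pow] at hn
    by_cases hz : x ^ (k + 1) * y ^ (k + 1) = 0
    · -- use that ⊥ is S-primary
      have := hs0 (x ^ (k + 1)) (y ^ (k + 1)) (by simpa [Ideal.mem_bot] using hz)
      rcases this with h | h
      · left
        have hx : s0 * x ∈ Q.radical := by
          refine Ideal.mem_radical_iff.mpr ⟨k + 1, ?_⟩
          have : (s0 * x) ^ (k + 1) = s0 ^ k * (s0 * x ^ (k + 1)) := by ring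
          rw [this, Ideal.mem_bot.mp h, mul_zero]
          exact Q.zero_mem
        have : s0 * s1 * x = s1 * (s0 * x) := by ring
        rw [this]
        exact Ideal.mul_mem_left _ _ hx
      · right
        have hy : (s0 * y) ^ (k + 1) ∈ Q.radical := by
          have : (s0 * y) ^ (k + 1) = s0 ^ k * (s0 * y ^ (k + 1)) := by ring
          rw [this]
          exact Ideal.mul_mem_left _ _
            (Ideal.radical_mono bot_le h)
        have hy2 : s0 * y ∈ Q.radical := by
          have := Ideal.mem_radical_iff.mpr ⟨k + 1, hy⟩
          rwa [Ideal.radical_idem] at this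
        have : s0 * s1 * y = s1 * (s0 * y) := by ring
        rw [this]
        exact Ideal.mul_mem_left _ _ hy2
    · have := hs1 (x ^ (k + 1)) (y ^ (k + 1)) hn hz
      rcases this with h | h
      · left
        have hx : s1 * x ∈ Q.radical := by
          refine Ideal.mem_radical_iff.mpr ⟨k + 1, ?_⟩
          have : (s1 * x) ^ (k + 1) = s1 ^ k * (s1 * x ^ (k + 1)) := by ring
          rw [this]
          exact Q.mul_mem_left _ h
        have : s0 * s1 * x = s0 * (s1 * x) := by ring
        rw [this]
        exact Ideal.mul_mem_left _ _ hx
      · right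
        have hy : (s1 * y) ^ (k + 1) ∈ Q.radical := by
          have : (s1 * y) ^ (k + 1) = s1 ^ k * (s1 * y ^ (k + 1)) := by ring
          rw [this]
          exact Ideal.mul_mem_left _ _ h
        have hy2 : s1 * y ∈ Q.radical := by
          have := Ideal.mem_radical_iff.mpr ⟨k + 1, hy⟩
          rwa [Ideal.radical_idem] at this
        have : s0 * s1 * y = s0 * (s1 * y) := by ring
        rw [this]
        exact Ideal.mul_mem_left _ _ hy2
end

section
/- Let A be a commutative ring, S a multiplicatively closed subset of A, and Q₁, …, Q_k finitely many ideals of A, each disjoint from S. If each Q_j is a weakly S-primary ideal of A and rad(Q_j) = rad(Q_h) for all j, h ∈ {1, …, k}, then the intersection ⋂_{j=1}^{k} Q_j is a weakly S-primary ideal of A. -/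
theorem weaklySPrimary_iInf {A : Type*} [CommRing A] (S : Set A)
    (hS : ∀ a ∈ S, ∀ b ∈ S, a * b ∈ S)
    (k : ℕ) (hk : 0 < k) (Q : Fin k → Ideal A)
    (hQS : ∀ j, ((Q j : Set A) ∩ S) = ∅)
    (hQ : ∀ j, WeaklySPrimary S (Q j))
    (hrad : ∀ j h, (Q j).radical = (Q h).radical) :
    WeaklySPrimary S (⨅ j, Q j) := by
  haveI : Nonempty (Fin k) := ⟨⟨0, hk⟩⟩
  choose s hsS hs using hQ
  refine ⟨∏ j, s j, ?_, ?_⟩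
  · exact Finset.prod_induction_nonempty s (· ∈ S) (fun a b ha hb => hS a ha b hb)
      Finset.univ_nonempty (fun j _ => hsS j)
  · intro x y hxy hne
    by_cases hall : ∀ j, s j * x ∈ Q j
    · left
      rw [Ideal.mem_iInf]
      intro j
      have h1 : s j * (∏ i ∈ Finset.univ.erase j, s i) * x ∈ Q j := by
        have := Ideal.mul_mem_left (Q j) (∏ i ∈ Finset.univ.erase j, s i) (hall j)
        have e : (∏ i ∈ Finset.univ.erase j, s i) * (s j * x)
            = s j * (∏ i ∈ Finset.univ.erase j, s i) * x := by ring
        rwa [e] at this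
      rwa [Finset.mul_prod_erase Finset.univ s (Finset.mem_univ j)] at h1
    · right
      push_neg at hall
      obtain ⟨j, hj⟩ := hall
      have hmem : x * y ∈ Q j := by
        have := Ideal.mem_iInf.mp hxy
        exact this j
      have hy : s j * y ∈ (Q j).radical := (hs j x y hmem hne).resolve_left hj
      -- (∏ s) * y ∈ rad (Q h) for every h
      have key : ∀ h, (∏ i, s i) * y ∈ (Q h).radical := by
        intro h
        have h1 : (∏ i ∈ Finset.univ.erase j, s i) * (s j * y) ∈ (Q j).radical :=
          Ideal.mul_mem_left _ _ hy
        have e : (∏ i ∈ Finset.univ.erase j, s i) * (s j * y)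
            = (∏ i, s i) * y := by
          rw [← Finset.mul_prod_erase Finset.univ s (Finset.mem_univ j)]; ring
        rw [e] at h1
        rwa [hrad j h] at h1
      choose n hn using fun h => key h
      set N := ∑ h, n h with hN
      refine ⟨N, ?_⟩
      rw [Ideal.mem_iInf]
      intro h
      have hle : n h ≤ N := Finset.single_le_sum (fun i _ => Nat.zero_le (n i))
        (Finset.mem_univ h)
      have : ((∏ i, s i) * y) ^ N
          = ((∏ i, s i) * y) ^ (N - n h) * ((∏ i, s i) * y) ^ (n h) := by
        rw [← pow_add, Nat.sub_add_cancel hle]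
      rw [this]
      exact Ideal.mul_mem_left _ _ (hn h)
end

section
/- Let A be a commutative ring and S ⊆ T two multiplicatively closed subsets of A such that for every t ∈ T there exists t′ ∈ T with t*t′ ∈ S. If Q is a weakly T-primary ideal of A (with Q ∩ T = ∅), then Q is a weakly S-primary ideal of A. -/
theorem weaklySPrimary_of_weaklyTPrimary {A : Type*} [CommRing A] (S T : Set A)
    (hS : ∀ a ∈ S, ∀ b ∈ S, a * b ∈ S)
    (hT : ∀ a ∈ T, ∀ b ∈ T, a * b ∈ T)
    (hST : S ⊆ T)
    (hcond : ∀ t ∈ T, ∃ t' ∈ T, t * t' ∈ S)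
    (Q : Ideal A) (hQT : (Q : Set A) ∩ T = ∅)
    (hQ : WeaklySPrimary T Q) :
    WeaklySPrimary S Q := by
  obtain ⟨t, htT, ht⟩ := hQ
  obtain ⟨t', ht'T, hs⟩ := hcond t htT
  refine ⟨t * t', hs, fun x y hxy hne => ?_⟩
  rcases ht x y hxy hne with h | h
  · left
    have : t' * (t * x) ∈ Q := Q.mul_mem_left t' h
    simpa [mul_assoc, mul_comm, mul_left_comm] using this
  · right
    have : t' * (t * y) ∈ Q.radical := Q.radical.mul_mem_left t' h
    simpa [mul_assoc, mul_comm, mul_left_comm] using this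
end

section
/- Let A be a commutative ring, S a multiplicatively closed subset of A containing 1, and Q an ideal of A with Q ∩ S = ∅. Let S′ = {x ∈ A : the image of x in the localization S⁻¹A is a unit}. Then Q is a weakly S-primary ideal of A if and only if Q is a weakly S′-primary ideal of A. -/
theorem weaklySPrimary_iff_saturation {A : Type*} [CommRing A] (S : Submonoid A)
    (Q : Ideal A) (hQS : (Q : Set A) ∩ (S : Set A) = ∅) :
    WeaklySPrimary (S : Set A) Q ↔
      WeaklySPrimary {x : A | IsUnit (algebraMap A (Localization S) x)} Q := by
  constructor
  · rintro ⟨s, hs, h⟩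
    exact ⟨s, IsLocalization.map_units (Localization S) ⟨s, hs⟩, h⟩
  · rintro ⟨s, hs, h⟩
    -- from unit, get c with s * c ∈ S
    obtain ⟨u, hu⟩ := isUnit_iff_exists_inv.1 hs
    obtain ⟨⟨a, t⟩, ht⟩ := IsLocalization.surj S u
    have key : algebraMap A (Localization S) (s * a) = algebraMap A (Localization S) (t : A) := by
      have := congrArg (· * algebraMap A (Localization S) (t : A)) hu
      simp only [one_mul] at this
      calc algebraMap A (Localization S) (s * a)
          = algebraMap A (Localization S) s * (u * algebraMap A (Localization S) (t : A)) := by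
            rw [ht]; simp [map_mul, mul_comm, mul_assoc, mul_left_comm]
        _ = algebraMap A (Localization S) s * u * algebraMap A (Localization S) (t : A) := by ring
        _ = algebraMap A (Localization S) (t : A) := by rw [hu, one_mul]
    obtain ⟨v, hv⟩ := (IsLocalization.eq_iff_exists S (Localization S)).1 key
    -- v * (s * a) = v * t, so s * (a * v) = t * v ∈ S
    have hmem : s * (a * v) ∈ S := by
      have : s * (a * v) = (t : A) * v := by
        have := hv
        push_cast at this ⊢
        linear_combination this
      rw [this]
      exact S.mul_mem t.2 v.2
    refine ⟨s * (a * v), hmem, fun x y hxy hne => ?_⟩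
    rcases h x y hxy hne with h1 | h1
    · left
      have : s * (a * v) * x = (a * v) * (s * x) := by ring
      rw [this]
      exact Q.mul_mem_left _ h1
    · right
      have : s * (a * v) * y = (a * v) * (s * y) := by ring
      rw [this]
      exact Q.radical.mul_mem_left _ h1
end

section
/- Let A be a commutative ring, S a multiplicatively closed subset of A, and Q an ideal of A with Q ∩ S = ∅. If the ideal (Q : s) = {a ∈ A : a*s ∈ Q} is a weakly primary ideal of A for some s ∈ S, then Q is a weakly S-primary ideal of A. -/
/-- An ideal `P` of a commutative ring is *weakly primary* if `x*y ∈ P` with `x*y ≠ 0`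
implies `x ∈ P` or `y ∈ rad(P)`. -/
def WeaklyPrimary {A : Type*} [CommRing A] (P : Ideal A) : Prop :=
  ∀ x y : A, x * y ∈ P → x * y ≠ 0 → x ∈ P ∨ y ∈ P.radical

/-- The ideal `(Q : s) = {a : A | a * s ∈ Q}`. -/
def quotBy {A : Type*} [CommRing A] (Q : Ideal A) (s : A) : Ideal A where
  carrier := {a : A | a * s ∈ Q}
  add_mem' := by
    intro a b ha hb
    simpa [add_mul] using Q.add_mem ha hb
  zero_mem' := by simp
  smul_mem' := by
    intro c a ha
    simpa [smul_eq_mul, mul_assoc] using Q.mul_mem_left c ha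

theorem weaklySPrimary_of_colon_weaklyPrimary {A : Type*} [CommRing A] (S : Set A)
    (hS : ∀ a ∈ S, ∀ b ∈ S, a * b ∈ S)
    (Q : Ideal A) (hQS : (Q : Set A) ∩ S = ∅)
    (h : ∃ s ∈ S, WeaklyPrimary (quotBy Q s)) :
    WeaklySPrimary S Q := by
  obtain ⟨s, hsS, hwp⟩ := h
  refine ⟨s, hsS, fun x y hxy hne => ?_⟩
  have hmem : x * y ∈ quotBy Q s := Q.mul_mem_right s hxy
  rcases hwp x y hmem hne with hx | hy
  · left
    have : x * s ∈ Q := hx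
    simpa [mul_comm] using this
  · right
    obtain ⟨n, hn⟩ := hy
    have hns : y ^ n * s ∈ Q := hn
    cases n with
    | zero =>
      exfalso
      have hs : s ∈ Q := by simpa using hns
      have : s ∈ (Q : Set A) ∩ S := ⟨hs, hsS⟩
      rw [hQS] at this
      exact this
    | succ k =>
      refine ⟨k + 1, ?_⟩
      have : (s * y) ^ (k + 1) = s ^ (k + 1) * y ^ (k + 1) := mul_pow s y (k + 1)
      rw [this]
      have : s ^ (k + 1) * y ^ (k + 1) = s ^ k * (y ^ (k + 1) * s) := by ring
      rw [this]
      exact Q.mul_mem_left _ hns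
end

section
/- Let A be a commutative ring, S₁ ⊆ S₂ two multiplicatively closed subsets of A with 1 ∈ S₁, and Q an ideal of A with Q ∩ S₂ = ∅. If Q is a weakly S₁-primary ideal of A, then there exists s ∈ S₁ such that the contraction of S₂⁻¹Q to A equals (Q : s) ∪ 0_{S₂}, i.e., {a ∈ A : a/1 ∈ S₂⁻¹Q} = {a ∈ A : s*a ∈ Q} ∪ {a ∈ A : ∃ t ∈ S₂, t*a = 0}. -/
theorem contraction_eq_colon_union_torsion {A : Type*} [CommRing A] (S₁ S₂ : Submonoid A)
    (h12 : (S₁ : Set A) ⊆ (S₂ : Set A))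
    (Q : Ideal A) (hQS : (Q : Set A) ∩ (S₂ : Set A) = ∅)
    (hQ : WeaklySPrimary (S₁ : Set A) Q) :
    ∃ s ∈ S₁,
      {a : A | algebraMap A (Localization S₂) a ∈ Q.map (algebraMap A (Localization S₂))}
        = {a : A | s * a ∈ Q} ∪ {a : A | ∃ t ∈ S₂, t * a = 0} := by
  obtain ⟨s, hs, hprim⟩ := hQ
  have key : ∀ a : A, algebraMap A (Localization S₂) a ∈
      Q.map (algebraMap A (Localization S₂)) ↔ ∃ t ∈ S₂, t * a ∈ Q := by
    intro a
    rw [show algebraMap A (Localization S₂) a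
        = IsLocalization.mk' (Localization S₂) a (1 : S₂) by
      rw [IsLocalization.mk'_one]]
    exact IsLocalization.mk'_mem_map_algebraMap_iff S₂ (Localization S₂) Q a 1
  refine ⟨s, hs, ?_⟩
  ext a
  simp only [Set.mem_setOf_eq, Set.mem_union, key a]
  constructor
  · rintro ⟨t, ht, htQ⟩
    by_cases h0 : t * a = 0
    · exact Or.inr ⟨t, ht, h0⟩
    · rcases hprim a t (by rwa [mul_comm]) (by rwa [mul_comm]) with h | h
      · exact Or.inl h
      · exfalso
        obtain ⟨n, hn⟩ := h
        have hmem : (s * t) ^ n ∈ (Q : Set A) ∩ (S₂ : Set A) :=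
          ⟨hn, pow_mem (mul_mem (h12 hs) ht) n⟩
        rw [hQS] at hmem
        exact hmem
  · rintro (h | ⟨t, ht, h0⟩)
    · exact ⟨s, h12 hs, h⟩
    · exact ⟨t, ht, h0 ▸ Q.zero_mem⟩
end

section
/- Let ψ : A₁ → A₂ be an injective ring homomorphism between commutative rings, and let S be a multiplicatively closed subset of A₁ such that 0 ∉ ψ(S). If Q₂ is a weakly ψ(S)-primary ideal of A₂ (with ψ(S) ∩ Q₂ = ∅), then ψ⁻¹(Q₂) is a weakly S-primary ideal of A₁. -/
theorem weaklySPrimary_comap {A₁ A₂ : Type*} [CommRing A₁] [CommRing A₂]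
    (ψ : A₁ →+* A₂) (hψ : Function.Injective ψ)
    (S : Set A₁) (hS : ∀ a ∈ S, ∀ b ∈ S, a * b ∈ S)
    (h0 : (0 : A₂) ∉ ψ '' S)
    (Q₂ : Ideal A₂) (hQS : (ψ '' S) ∩ (Q₂ : Set A₂) = ∅)
    (hQ : WeaklySPrimary (ψ '' S) Q₂) :
    WeaklySPrimary S (Q₂.comap ψ) := by
  obtain ⟨t, ⟨s, hsS, rfl⟩, ht⟩ := hQ
  refine ⟨s, hsS, fun x y hxy hne => ?_⟩
  have hmem : ψ x * ψ y ∈ Q₂ := by simpa [map_mul] using hxy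
  have hne2 : ψ x * ψ y ≠ 0 := by
    rw [← map_mul, ← map_zero ψ]
    exact fun h => hne (hψ h)
  rcases ht (ψ x) (ψ y) hmem hne2 with h | h
  · left; simpa [Ideal.mem_comap, map_mul] using h
  · right
    obtain ⟨n, hn⟩ := h
    exact ⟨n, by simpa [Ideal.mem_comap, map_pow, map_mul] using hn⟩
end

section
/- Let A₁, A₂ be commutative rings, Q₁ a nonzero ideal of A₁, Q₂ a nonzero ideal of A₂, and S₁ ⊆ A₁, S₂ ⊆ A₂ multiplicatively closed subsets with (Q₁ × Q₂) ∩ (S₁ × S₂) = ∅. Then the following are equivalent: (i) Q₁ × Q₂ is a weakly (S₁ × S₂)-primary ideal of A₁ × A₂; (ii) Q₁ is an S₁-primary ideal of A₁ and S₂ ∩ Q₂ ≠ ∅, or Q₂ is an S₂-primary ideal of A₂ and S₁ ∩ Q₁ ≠ ∅; (iii) Q₁ × Q₂ is an (S₁ × S₂)-primary ideal of A₁ × A₂. -/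
lemma mem_prod' {A₁ A₂ : Type*} [CommRing A₁] [CommRing A₂]
    {Q₁ : Ideal A₁} {Q₂ : Ideal A₂} {x : A₁ × A₂} :
    x ∈ Q₁.prod Q₂ ↔ x.1 ∈ Q₁ ∧ x.2 ∈ Q₂ := by
  cases x; exact Ideal.mem_prod _ _

lemma mem_radical_prod {A₁ A₂ : Type*} [CommRing A₁] [CommRing A₂]
    (Q₁ : Ideal A₁) (Q₂ : Ideal A₂) (x : A₁ × A₂) :
    x ∈ (Q₁.prod Q₂).radical ↔ x.1 ∈ Q₁.radical ∧ x.2 ∈ Q₂.radical := by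
  constructor
  · rintro ⟨n, hn⟩
    rw [mem_prod'] at hn
    exact ⟨⟨n, by simpa using hn.1⟩, ⟨n, by simpa using hn.2⟩⟩
  · rintro ⟨⟨n, hn⟩, ⟨m, hm⟩⟩
    refine ⟨n + m, mem_prod'.mpr ⟨?_, ?_⟩⟩
    · simpa [pow_add] using Q₁.mul_mem_right _ hn
    · simpa [pow_add, pow_mul] using Q₂.mul_mem_left _ hm

lemma pow_mem_mulClosed {A : Type*} [CommRing A] {S : Set A}
    (hS : ∀ a ∈ S, ∀ b ∈ S, a * b ∈ S) {s : A} (hs : s ∈ S) :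
    ∀ n : ℕ, s ^ (n + 1) ∈ S := by
  intro n
  induction n with
  | zero => simpa using hs
  | succ k ih => rw [pow_succ]; exact hS _ ih _ hs

theorem weaklySPrimary_prod_iff {A₁ A₂ : Type*} [CommRing A₁] [CommRing A₂]
    (Q₁ : Ideal A₁) (Q₂ : Ideal A₂) (hQ₁ : Q₁ ≠ ⊥) (hQ₂ : Q₂ ≠ ⊥)
    (S₁ : Set A₁) (S₂ : Set A₂)
    (hS₁ : ∀ a ∈ S₁, ∀ b ∈ S₁, a * b ∈ S₁)
    (hS₂ : ∀ a ∈ S₂, ∀ b ∈ S₂, a * b ∈ S₂)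
    (hdisj : ((Q₁.prod Q₂ : Ideal (A₁ × A₂)) : Set (A₁ × A₂)) ∩ (S₁ ×ˢ S₂) = ∅) :
    (WeaklySPrimary (S₁ ×ˢ S₂) (Q₁.prod Q₂) ↔
        (SPrimary S₁ Q₁ ∧ (S₂ ∩ (Q₂ : Set A₂)).Nonempty) ∨
          (SPrimary S₂ Q₂ ∧ (S₁ ∩ (Q₁ : Set A₁)).Nonempty)) ∧
      (WeaklySPrimary (S₁ ×ˢ S₂) (Q₁.prod Q₂) ↔
        SPrimary (S₁ ×ˢ S₂) (Q₁.prod Q₂)) := by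
  obtain ⟨q₁, hq₁, hq₁0⟩ := Submodule.exists_mem_ne_zero_of_ne_bot hQ₁
  obtain ⟨q₂, hq₂, hq₂0⟩ := Submodule.exists_mem_ne_zero_of_ne_bot hQ₂
  -- (i) → (ii)
  have h12 : WeaklySPrimary (S₁ ×ˢ S₂) (Q₁.prod Q₂) →
      (SPrimary S₁ Q₁ ∧ (S₂ ∩ (Q₂ : Set A₂)).Nonempty) ∨
        (SPrimary S₂ Q₂ ∧ (S₁ ∩ (Q₁ : Set A₁)).Nonempty) := by
    rintro ⟨⟨s₁, s₂⟩, hs, h⟩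
    obtain ⟨hs₁, hs₂⟩ := Set.mem_prod.mp hs
    have hp1 : SPrimary S₁ Q₁ := by
      refine ⟨s₁, hs₁, fun x y hxy => ?_⟩
      have := h (x, q₂) (y, 1) (mem_prod'.mpr ⟨by simpa using hxy, by simpa using hq₂⟩)
        (by simp [Prod.ext_iff, hq₂0])
      rcases this with h' | h'
      · exact Or.inl (mem_prod'.mp h').1
      · exact Or.inr ((mem_radical_prod _ _ _).mp h').1
    have hp2 : SPrimary S₂ Q₂ := by
      refine ⟨s₂, hs₂, fun x y hxy => ?_⟩
      have := h (q₁, x) (1, y) (mem_prod'.mpr ⟨by simpa using hq₁, by simpa using hxy⟩)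
        (by simp [Prod.ext_iff, hq₁0])
      rcases this with h' | h'
      · exact Or.inl (mem_prod'.mp h').2
      · exact Or.inr ((mem_radical_prod _ _ _).mp h').2
    have := h (1, q₂) (q₁, 1) (mem_prod'.mpr ⟨by simpa using hq₁, by simpa using hq₂⟩)
      (by simp [Prod.ext_iff, hq₁0])
    rcases this with h' | h'
    · exact Or.inr ⟨hp2, s₁, hs₁, by simpa using (mem_prod'.mp h').1⟩
    · have hrad : s₂ ∈ Q₂.radical := by simpa using ((mem_radical_prod _ _ _).mp h').2
      obtain ⟨n, hn⟩ := hrad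
      rcases Nat.eq_zero_or_pos n with rfl | hn'
      · simp only [pow_zero] at hn
        exact Or.inl ⟨hp1, s₂, hs₂, by simpa using Q₂.mul_mem_left s₂ hn⟩
      · obtain ⟨k, rfl⟩ := Nat.exists_eq_add_of_lt hn'
        exact Or.inl ⟨hp1, s₂ ^ (k + 1), pow_mem_mulClosed hS₂ hs₂ k, by simpa using hn⟩
  -- (ii) → (iii)
  have h23 : ((SPrimary S₁ Q₁ ∧ (S₂ ∩ (Q₂ : Set A₂)).Nonempty) ∨
        (SPrimary S₂ Q₂ ∧ (S₁ ∩ (Q₁ : Set A₁)).Nonempty)) →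
      SPrimary (S₁ ×ˢ S₂) (Q₁.prod Q₂) := by
    rintro (⟨⟨s₁, hs₁, h₁⟩, ⟨t₂, ht₂S, ht₂Q⟩⟩ | ⟨⟨s₂, hs₂, h₂⟩, ⟨t₁, ht₁S, ht₁Q⟩⟩)
    · refine ⟨(s₁, t₂), Set.mem_prod.mpr ⟨hs₁, ht₂S⟩, fun x y hxy => ?_⟩
      obtain ⟨hx1, _⟩ := mem_prod'.mp hxy
      rcases h₁ x.1 y.1 hx1 with h' | h'
      · exact Or.inl (mem_prod'.mpr ⟨h', Q₂.mul_mem_right _ ht₂Q⟩)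
      · exact Or.inr ((mem_radical_prod _ _ _).mpr
          ⟨h', Ideal.le_radical (Q₂.mul_mem_right _ ht₂Q)⟩)
    · refine ⟨(t₁, s₂), Set.mem_prod.mpr ⟨ht₁S, hs₂⟩, fun x y hxy => ?_⟩
      obtain ⟨_, hx2⟩ := mem_prod'.mp hxy
      rcases h₂ x.2 y.2 hx2 with h' | h'
      · exact Or.inl (mem_prod'.mpr ⟨Q₁.mul_mem_right _ ht₁Q, h'⟩)
      · exact Or.inr ((mem_radical_prod _ _ _).mpr
          ⟨Ideal.le_radical (Q₁.mul_mem_right _ ht₁Q), h'⟩)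
  -- (iii) → (i)
  have h31 : SPrimary (S₁ ×ˢ S₂) (Q₁.prod Q₂) → WeaklySPrimary (S₁ ×ˢ S₂) (Q₁.prod Q₂) := by
    rintro ⟨s, hs, h⟩
    exact ⟨s, hs, fun x y hxy _ => h x y hxy⟩
  exact ⟨⟨h12, fun h => h31 (h23 h)⟩, ⟨fun h => h23 (h12 h), h31⟩⟩
end

section
/- Let A be a commutative ring, S a multiplicatively closed subset of A, and Q a strongly weakly S-primary ideal of A with strongly weakly S-primary element s ∈ S. If x, y ∈ A satisfy x*y = 0, s*x ∉ Q, and s*y ∉ rad(Q), then x*q = 0 and y*q = 0 for every q ∈ Q. -/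
/-- `s` is a *strongly weakly `S`-primary element* of `Q`: for all ideals `I`, `J`,
if `I*J ⊆ Q` and `I*J ≠ 0` then `s*I ⊆ Q` or `s*J ⊆ rad(Q)`. -/
def StronglyWeaklySPrimaryElem {A : Type*} [CommRing A] (Q : Ideal A) (s : A) : Prop :=
  ∀ I J : Ideal A, I * J ≤ Q → I * J ≠ ⊥ →
    (∀ x ∈ I, s * x ∈ Q) ∨ (∀ y ∈ J, s * y ∈ Q.radical)

/-- `Q` is *strongly weakly `S`-primary* if some `s ∈ S` is a strongly weakly
`S`-primary element of `Q`. -/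
def StronglyWeaklySPrimary {A : Type*} [CommRing A] (S : Set A) (Q : Ideal A) : Prop :=
  ∃ s ∈ S, StronglyWeaklySPrimaryElem Q s

theorem strongly_weakly_sPrimary_annihilates {A : Type*} [CommRing A] (S : Set A)
    (hS : ∀ a ∈ S, ∀ b ∈ S, a * b ∈ S)
    (Q : Ideal A) (hQS : (Q : Set A) ∩ S = ∅)
    (s : A) (hsS : s ∈ S) (hs : StronglyWeaklySPrimaryElem Q s)
    (x y : A) (hxy : x * y = 0)
    (hx : s * x ∉ Q) (hy : s * y ∉ Q.radical) :
    ∀ q ∈ Q, x * q = 0 ∧ y * q = 0 := by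
  intro q hq
  constructor
  · by_contra hxq
    have hle : Ideal.span {x} * Ideal.span {y, q} ≤ Q := by
      rw [Ideal.span_mul_span, Ideal.span_le]
      rintro z hz
      obtain ⟨a, ha, b, hb, rfl⟩ := hz
      subst ha
      rcases hb with rfl | rfl
      · simp [hxy]
      · exact Q.mul_mem_left _ hq
    have hne : Ideal.span {x} * Ideal.span {y, q} ≠ ⊥ := by
      intro h
      apply hxq
      have : x * q ∈ Ideal.span {x} * Ideal.span ({y, q} : Set A) :=
        Ideal.mul_mem_mul (Ideal.subset_span rfl) (Ideal.subset_span (by simp))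
      rw [h] at this
      exact this
    rcases hs _ _ hle hne with h | h
    · exact hx (h x (Ideal.subset_span rfl))
    · exact hy (h y (Ideal.subset_span (by simp)))
  · by_contra hyq
    have hle : Ideal.span {x, q} * Ideal.span {y} ≤ Q := by
      rw [Ideal.span_mul_span, Ideal.span_le]
      rintro z hz
      obtain ⟨a, ha, b, hb, rfl⟩ := hz
      subst hb
      rcases ha with rfl | rfl
      · simp [hxy]
      · exact Q.mul_mem_right _ hq
    have hne : Ideal.span {x, q} * Ideal.span {y} ≠ ⊥ := by
      intro h
      apply hyq
      have : q * y ∈ Ideal.span ({x, q} : Set A) * Ideal.span {y} :=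
        Ideal.mul_mem_mul (Ideal.subset_span (by simp)) (Ideal.subset_span rfl)
      rw [h] at this
      simp only [Ideal.mem_bot] at this
      rw [mul_comm]
      exact this
    rcases hs _ _ hle hne with h | h
    · exact hx (h x (Ideal.subset_span (by simp)))
    · exact hy (h y (Ideal.subset_span rfl))
end
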